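/- If L : TQ × ℝ → ℝ is a regular Lagrangian with contact form η_L = ds − (∂L/∂vⁱ) dqⁱ, then the Reeb vector field of (TQ × ℝ, η_L) is R_L = ∂/∂s − W^{ji} (∂²L/∂s∂vʲ) ∂/∂vⁱ, where (W^{ij}) is the inverse of the Hessian (W_{ij}) = (∂²L/∂vⁱ∂vʲ). -/

import Mathlib

/-!  The Reeb vector field of a regular contact Lagrangian system on `TQ × ℝ`.
Model space: `M = (Fin n → ℝ) × (Fin n → ℝ) × ℝ` with coordinates `(qⁱ, vⁱ, s)`. -/

open scoped BigOperators

variable (n : ℕ)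

/-- `∂L/∂vⁱ`. -/
noncomputable def Lv (L : (Fin n → ℝ) × (Fin n → ℝ) × ℝ → ℝ) (i : Fin n)
    (x : (Fin n → ℝ) × (Fin n → ℝ) × ℝ) : ℝ :=
  fderiv ℝ L x (0, Pi.single i 1, 0)

/-- The contact Lagrangian form `η_L = ds − (∂L/∂vⁱ) dqⁱ`. -/
noncomputable def etaL (L : (Fin n → ℝ) × (Fin n → ℝ) × ℝ → ℝ)
    (x u : (Fin n → ℝ) × (Fin n → ℝ) × ℝ) : ℝ :=
  u.2.2 - ∑ i, Lv n L i x * u.1 i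

/-- Exterior differential of a 1-form on a vector space. -/
noncomputable def extDerivOne {E : Type*} [NormedAddCommGroup E] [NormedSpace ℝ E]
    (ω : E → E → ℝ) (x u v : E) : ℝ :=
  fderiv ℝ (fun y => ω y v) x u - fderiv ℝ (fun y => ω y u) x v

/-- The Hessian `W_{ij} = ∂²L/∂vⁱ∂vʲ`. -/
noncomputable def hessW (L : (Fin n → ℝ) × (Fin n → ℝ) × ℝ → ℝ)
    (x : (Fin n → ℝ) × (Fin n → ℝ) × ℝ) : Matrix (Fin n) (Fin n) ℝ :=
  Matrix.of fun i j =>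
    fderiv ℝ (fun y => fderiv ℝ L y (0, Pi.single j 1, 0)) x (0, Pi.single i 1, 0)

/-- The candidate Reeb field `R_L = ∂/∂s − W^{ji} (∂²L/∂s∂vʲ) ∂/∂vⁱ`. -/
noncomputable def reebL (L : (Fin n → ℝ) × (Fin n → ℝ) × ℝ → ℝ)
    (x : (Fin n → ℝ) × (Fin n → ℝ) × ℝ) : (Fin n → ℝ) × (Fin n → ℝ) × ℝ :=
  (0,
   fun i => -∑ j, (hessW n L x)⁻¹ j i *
      fderiv ℝ (fun y => fderiv ℝ L y (0, Pi.single j 1, 0)) x (0, 0, 1),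
   1)

section Aux

variable {n}

/-- `Lv` is differentiable for smooth `L`. -/
lemma Lv_differentiable {L : (Fin n → ℝ) × (Fin n → ℝ) × ℝ → ℝ}
    (hL : ContDiff ℝ (⊤ : ℕ∞) L) (i : Fin n) : Differentiable ℝ (Lv n L i) :=
  (((hL.fderiv_right (m := 1) (WithTop.coe_le_coe.mpr le_top)).clm_apply contDiff_const).differentiable one_ne_zero)

/-- The derivative of `y ↦ η_L(y, v)` in direction `w`. -/
lemma fderiv_etaL {L : (Fin n → ℝ) × (Fin n → ℝ) × ℝ → ℝ}
    (hL : ContDiff ℝ (⊤ : ℕ∞) L) (x v w : (Fin n → ℝ) × (Fin n → ℝ) × ℝ) :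
    fderiv ℝ (fun y => etaL n L y v) x w
      = -∑ i, fderiv ℝ (Lv n L i) x w * v.1 i := by
  have h1 : (fun y => etaL n L y v) = fun y => v.2.2 - ∑ i, Lv n L i y * v.1 i := rfl
  rw [h1, fderiv_const_sub,
    fderiv_fun_sum (fun i _ => ((Lv_differentiable hL i).differentiableAt).mul_const _)]
  simp only [ContinuousLinearMap.neg_apply, ContinuousLinearMap.sum_apply, neg_inj]
  refine Finset.sum_congr rfl fun i _ => ?_
  rw [fderiv_mul_const ((Lv_differentiable hL i).differentiableAt)]
  simp [mul_comm]

/-- Key computation: the derivative of each `Lv i` vanishes in the direction of `reebL`. -/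
lemma fderiv_Lv_reebL {L : (Fin n → ℝ) × (Fin n → ℝ) × ℝ → ℝ}
    (hL : ContDiff ℝ (⊤ : ℕ∞) L) (hreg : ∀ x, (hessW n L x).det ≠ 0)
    (x : (Fin n → ℝ) × (Fin n → ℝ) × ℝ) (i : Fin n) :
    fderiv ℝ (Lv n L i) x (reebL n L x) = 0 := by
  classical
  set W := hessW n L x with hW
  set a : Fin n → ℝ := fun k => fderiv ℝ (Lv n L k) x (0, 0, 1) with ha
  set r : Fin n → ℝ := fun j => -∑ k, W⁻¹ k j * a k with hr
  have hreeb : reebL n L x = (0, r, 1) := rfl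
  have hdecomp : (reebL n L x)
      = (∑ j, r j • (((0 : Fin n → ℝ), Pi.single j (1:ℝ), (0:ℝ)) : (Fin n → ℝ) × (Fin n → ℝ) × ℝ)) + (0, 0, 1) := by
    rw [hreeb]
    refine Prod.ext ?_ (Prod.ext ?_ ?_)
    · simp [Prod.fst_sum]
    · funext k
      simp [Prod.snd_sum, Prod.fst_sum, Finset.sum_apply, Pi.single_apply,
        mul_ite, mul_one, mul_zero, Finset.sum_ite_eq']
    · simp [Prod.snd_sum]
  have hWji : ∀ j, fderiv ℝ (Lv n L i) x (0, Pi.single j 1, 0) = W j i := fun j => rfl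
  rw [hdecomp, map_add, map_sum]
  simp only [map_smul, smul_eq_mul, hWji]
  have hinv : W⁻¹ * W = 1 := Matrix.nonsing_inv_mul _ (isUnit_iff_ne_zero.mpr (hreg x))
  have hsum : ∑ j, r j * W j i = -a i := by
    calc ∑ j, r j * W j i
        = -∑ k, a k * ((W⁻¹ * W) k i) := by
          simp only [hr, neg_mul, Finset.sum_neg_distrib, Finset.sum_mul,
            Matrix.mul_apply, Finset.mul_sum]
          rw [Finset.sum_comm]
          congr 1; refine Finset.sum_congr rfl fun k _ => ?_
          refine Finset.sum_congr rfl fun j _ => ?_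
          ring
      _ = -a i := by simp [hinv, Matrix.one_apply]
  rw [hsum]
  simp [ha]

end Aux

/-- for a regular Lagrangian `L`, the Reeb vector field of
`(TQ × ℝ, η_L)` is `R_L = ∂/∂s − W^{ji}(∂²L/∂s∂vʲ) ∂/∂vⁱ`, i.e. this vector field
satisfies `i_{R_L} dη_L = 0` and `i_{R_L} η_L = 1`. -/
theorem reebL_is_reeb (L : (Fin n → ℝ) × (Fin n → ℝ) × ℝ → ℝ)
    (hL : ContDiff ℝ (⊤ : ℕ∞) L) (hreg : ∀ x, (hessW n L x).det ≠ 0) :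
    (∀ x u : (Fin n → ℝ) × (Fin n → ℝ) × ℝ,
        extDerivOne (etaL n L) x (reebL n L x) u = 0) ∧
    (∀ x : (Fin n → ℝ) × (Fin n → ℝ) × ℝ, etaL n L x (reebL n L x) = 1) := by
  constructor
  · intro x u
    unfold extDerivOne
    rw [fderiv_etaL hL, fderiv_etaL hL]
    have h1 : (reebL n L x).1 = 0 := rfl
    simp only [h1, Pi.zero_apply, mul_zero, Finset.sum_const_zero, neg_zero, sub_zero]
    simp [fderiv_Lv_reebL hL hreg x]
  · intro x
    have h1 : (reebL n L x).1 = 0 := rfl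
    have h2 : (reebL n L x).2.2 = 1 := rfl
    simp [etaL, h1, h2]
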